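/- Let φ be the ℂ-algebra homomorphism from the polynomial ring ℂ[z_S, z_T, z₁₂, z₂₃, z₃₁, z₂₁, z₃₂, z₁₃] to the group algebra ℂ[ℤ⁹] (the AddMonoidAlgebra of ℤ⁹ over ℂ) sending z_S to the basis element of S, z_T to the basis element of T, and each z_{ij} to the basis element of P_{ij}. Then the kernel of φ is the principal ideal generated by z_S·z_T − z₁₂·z₂₃·z₃₁. -/

import Mathlib

/-- The eight distinguished elements of `ℤ⁹` (coordinates ordered
`(a₁,b₁,c₁,a₂,a₃,b₂,b₃,c₂,c₃)`), listed in the variable order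
`S, T, P₁₂, P₂₃, P₃₁, P₂₁, P₃₂, P₁₃`:
`S = e_{a₂}+e_{b₂}+e_{c₂}`, `T = e_{a₃}+e_{b₃}+e_{c₃}`, `P₁₂ = e_{a₂}+e_{b₃}`,
`P₂₃ = e_{b₂}+e_{c₃}`, `P₃₁ = e_{c₂}+e_{a₃}`, `P₂₁ = e_{b₁}`, `P₃₂ = e_{c₁}`,
`P₁₃ = e_{a₁}`. -/
def bzGens : Fin 8 → Fin 9 → ℤ :=
  ![![0, 0, 0, 1, 0, 1, 0, 1, 0],  -- S
    ![0, 0, 0, 0, 1, 0, 1, 0, 1],  -- T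
    ![0, 0, 0, 1, 0, 0, 1, 0, 0],  -- P₁₂
    ![0, 0, 0, 0, 0, 1, 0, 0, 1],  -- P₂₃
    ![0, 0, 0, 0, 1, 0, 0, 1, 0],  -- P₃₁
    ![0, 1, 0, 0, 0, 0, 0, 0, 0],  -- P₂₁
    ![0, 0, 1, 0, 0, 0, 0, 0, 0],  -- P₃₂
    ![1, 0, 0, 0, 0, 0, 0, 0, 0]]  -- P₁₃

/-- The `ℂ`-algebra map `φ : ℂ[z_S, z_T, z₁₂, z₂₃, z₃₁, z₂₁, z₃₂, z₁₃] → ℂ[ℤ⁹]`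
sending each variable to the corresponding basis element of the group algebra. -/
noncomputable def phiBZ : MvPolynomial (Fin 8) ℂ →ₐ[ℂ] AddMonoidAlgebra ℂ (Fin 9 → ℤ) :=
  MvPolynomial.aeval fun i => AddMonoidAlgebra.of' ℂ (Fin 9 → ℤ) (bzGens i)

/-!
`φ` is the monomial map along the additive map `A : ℕ⁸ → ℤ⁹` sending the `i`-th exponent vector to
the `i`-th generator, i.e. `AddMonoidAlgebra.mapDomain A`. Modulo `z_S z_T - z₁₂ z₂₃ z₃₁` every
monomial is congruent to one in which `z_S` or `z_T` does not occur, and `A` is injective on such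
exponents. So a polynomial in the kernel is congruent to one in normal form, whose image under `φ`
has no cancellation; hence that normal form is zero.
-/

open MvPolynomial

section
variable {σ R M : Type*} [CommRing R] [AddCommMonoid M]
open AddMonoidAlgebra

theorem aeval_of'_eq_mapDomainAlgHom (g : σ → M) :
    aeval (fun i => AddMonoidAlgebra.of' R M (g i)) =
      mapDomainAlgHom R R (Finsupp.linearCombination ℕ g).toAddMonoidHom := by
  refine MvPolynomial.algHom_ext fun i => ?_
  rw [aeval_X]
  simp [X, monomial]

theorem sub_mapDomain_mem_of_forall_monomial_sub_mem {I : Ideal (MvPolynomial σ R)}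
    {nf : (σ →₀ ℕ) → (σ →₀ ℕ)} (hnf : ∀ v, monomial v (1 : R) - monomial (nf v) 1 ∈ I)
    (p : MvPolynomial σ R) :
    p - mapDomain nf p ∈ I := by
  induction p using MvPolynomial.induction_on' with
  | monomial u a =>
    have h : mapDomain nf (monomial u a) = monomial (nf u) a := mapDomain_single
    rw [h, ← mul_one a, ← C_mul_monomial, ← C_mul_monomial, ← mul_sub]
    exact I.mul_mem_left _ (hnf u)
  | add p q hp hq =>
    rw [mapDomain_add, add_sub_add_comm]
    exact I.add_mem hp hq

theorem AddMonoidAlgebra.eq_zero_of_mapDomain_eq_zero {f : σ → M} {S : Set σ}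
    (hf : Set.InjOn f S) {x : AddMonoidAlgebra R σ} (hx : ↑x.coeff.support ⊆ S)
    (h : mapDomain f x = 0) : x = 0 := by
  refine coeff_injective (Finsupp.mapDomain_injOn S hf hx (by simp) ?_)
  simpa using congrArg coeff h

theorem ker_mapDomainAlgHom_eq_of_normalForm {I : Ideal (MvPolynomial σ R)} (A : (σ →₀ ℕ) →+ M)
    (hI : I ≤ RingHom.ker (mapDomainAlgHom R R A)) {nf : (σ →₀ ℕ) → (σ →₀ ℕ)}
    (hnf : ∀ v, monomial v (1 : R) - monomial (nf v) 1 ∈ I) (hA : Set.InjOn A (Set.range nf)) :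
    RingHom.ker (mapDomainAlgHom R R A) = I := by
  classical
  refine le_antisymm (fun p hp => ?_) hI
  have hpr : p - mapDomain nf p ∈ I := sub_mapDomain_mem_of_forall_monomial_sub_mem hnf p
  have hr : mapDomainAlgHom R R A (mapDomain nf p) = 0 := by
    have h := RingHom.mem_ker.1 (hI hpr)
    rwa [map_sub, RingHom.mem_ker.1 hp, zero_sub, neg_eq_zero] at h
  have hsupp : ↑(mapDomain nf p).coeff.support ⊆ Set.range nf := by
    refine subset_trans (Finset.coe_subset.2 Finsupp.mapDomain_support) ?_
    simp
  simpa [eq_zero_of_mapDomain_eq_zero hA hsupp hr] using hpr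

theorem mapDomainAlgHom_monomial_sub_monomial_eq_zero {A : (σ →₀ ℕ) →+ M} {u w : σ →₀ ℕ}
    (h : A u = A w) : mapDomainAlgHom R R A (monomial u 1 - monomial w 1) = 0 := by
  rw [map_sub, sub_eq_zero]
  simp [monomial, h]

theorem monomial_add_smul_sub_monomial_add_smul_mem_span (b u w : σ →₀ ℕ) (k : ℕ) :
    monomial (b + k • u) (1 : R) - monomial (b + k • w) 1 ∈
      Ideal.span {monomial u (1 : R) - monomial w 1} := by
  have hpow : ∀ s : σ →₀ ℕ, monomial (b + k • s) (1 : R) = monomial b 1 * monomial s 1 ^ k := by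
    intro s; rw [monomial_pow, monomial_mul, one_pow, mul_one]
  rw [hpow, hpow, ← mul_sub]
  exact Ideal.mul_mem_left _ _ (Ideal.mem_span_singleton.2 (sub_dvd_pow_sub_pow _ _ k))
end

section
variable {R : Type*} [CommRing R]

noncomputable def expST : Fin 8 →₀ ℕ := Finsupp.single 0 1 + Finsupp.single 1 1

noncomputable def expP₁₂P₂₃P₃₁ : Fin 8 →₀ ℕ :=
  Finsupp.single 2 1 + Finsupp.single 3 1 + Finsupp.single 4 1

theorem X_mul_X_sub_X_mul_X_mul_X :
    (X 0 * X 1 - X 2 * X 3 * X 4 : MvPolynomial (Fin 8) R) =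
      monomial expST 1 - monomial expP₁₂P₂₃P₃₁ 1 := by
  simp [X, monomial_mul, expST, expP₁₂P₂₃P₃₁]

theorem linearCombination_bzGens_expST :
    Finsupp.linearCombination ℕ bzGens expST =
      Finsupp.linearCombination ℕ bzGens expP₁₂P₂₃P₃₁ := by
  simp [expST, expP₁₂P₂₃P₃₁, bzGens]

noncomputable def bzNormalForm (v : Fin 8 →₀ ℕ) : Fin 8 →₀ ℕ :=
  (v - min (v 0) (v 1) • expST) + min (v 0) (v 1) • expP₁₂P₂₃P₃₁

theorem bzNormalForm_zero_eq_zero_or_one_eq_zero (v : Fin 8 →₀ ℕ) :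
    bzNormalForm v 0 = 0 ∨ bzNormalForm v 1 = 0 := by
  have h0 : bzNormalForm v 0 = v 0 - min (v 0) (v 1) := by
    simp [bzNormalForm, expST, expP₁₂P₂₃P₃₁]
  have h1 : bzNormalForm v 1 = v 1 - min (v 0) (v 1) := by
    simp [bzNormalForm, expST, expP₁₂P₂₃P₃₁]
  omega

theorem monomial_sub_monomial_bzNormalForm_mem (v : Fin 8 →₀ ℕ) :
    monomial v (1 : R) - monomial (bzNormalForm v) 1 ∈
      Ideal.span {monomial expST (1 : R) - monomial expP₁₂P₂₃P₃₁ 1} := by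
  have hle : min (v 0) (v 1) • expST ≤ v := by
    intro i
    fin_cases i <;> simp [expST]
  have h := monomial_add_smul_sub_monomial_add_smul_mem_span (R := R)
    (v - min (v 0) (v 1) • expST) expST expP₁₂P₂₃P₃₁ (min (v 0) (v 1))
  rwa [tsub_add_cancel_of_le hle] at h

theorem linearCombination_bzGens (v : Fin 8 →₀ ℕ) :
    Finsupp.linearCombination ℕ bzGens v =
      ![(v 7 : ℤ), v 5, v 6, v 0 + v 2, v 1 + v 4, v 0 + v 3, v 1 + v 2, v 0 + v 4, v 1 + v 3] := by
  ext j
  fin_cases j <;>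
    simp [Finsupp.linearCombination_apply, Finsupp.sum_fintype, Fin.sum_univ_eight, bzGens]

/-- The exponents of `z_S` and `z_T` are recovered as the positive and negative parts of
`a₂ - b₃ = v 0 - v 1`. -/
theorem injOn_linearCombination_bzGens :
    Set.InjOn (Finsupp.linearCombination ℕ bzGens) {v | v 0 = 0 ∨ v 1 = 0} := by
  rintro v (hv : v 0 = 0 ∨ v 1 = 0) w (hw : w 0 = 0 ∨ w 1 = 0) h
  simp only [linearCombination_bzGens, Matrix.vecCons_inj] at h
  ext i
  fin_cases i <;> dsimp <;> omega
end

open MvPolynomial in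
/-- The kernel of `φ` is the principal ideal generated by `z_S·z_T − z₁₂·z₂₃·z₃₁`. -/
theorem stmt_5 :
    RingHom.ker phiBZ =
      Ideal.span {(X 0 * X 1 - X 2 * X 3 * X 4 : MvPolynomial (Fin 8) ℂ)} := by
  rw [phiBZ, aeval_of'_eq_mapDomainAlgHom, X_mul_X_sub_X_mul_X_mul_X]
  refine ker_mapDomainAlgHom_eq_of_normalForm _ ?_ monomial_sub_monomial_bzNormalForm_mem
    (injOn_linearCombination_bzGens.mono ?_)
  · rw [Ideal.span_le, Set.singleton_subset_iff]
    exact mapDomainAlgHom_monomial_sub_monomial_eq_zero linearCombination_bzGens_expST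
  · rintro _ ⟨v, rfl⟩
    exact bzNormalForm_zero_eq_zero_or_one_eq_zero v
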